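/- arXiv:cs/0007040 — 5 statements merged into one kernel-verified Lean document; each statement's English description precedes it below -/
import Mathlib

section
/- If a relation ⪯ satisfies Left Disjunction and Equivalence together with Dominance and Left Monotonicity, then it satisfies Bounded Cut and Bounded Right Monotonicity. -/
/-- A propositional language: a type of sentences with boolean connectives. -/
structure Lang (L : Type) where
  or : L → L → L
  and : L → L → L
  not : L → L
  imp : L → L → L
  bot : L
  top : L

/-- A classical valuation of the language: respects all connectives. -/
def Lang.Val {L : Type} (S : Lang L) (v : L → Prop) : Prop :=
  (∀ a b, v (S.or a b) ↔ v a ∨ v b) ∧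
  (∀ a b, v (S.and a b) ↔ v a ∧ v b) ∧
  (∀ a, v (S.not a) ↔ ¬ v a) ∧
  (∀ a b, v (S.imp a b) ↔ (v a → v b)) ∧
  ¬ v S.bot ∧ v S.top

/-- Classical consequence from a set of premises. -/
def Lang.SEnt {L : Type} (S : Lang L) (X : Set L) (b : L) : Prop :=
  ∀ v, S.Val v → (∀ a ∈ X, v a) → v b

/-- Classical consequence between single sentences: α ⊢ β. -/
def Lang.ent {L : Type} (S : Lang L) (a b : L) : Prop := S.SEnt {a} b

/-- Deductive closure. -/
def Lang.Cn {L : Type} (S : Lang L) (X : Set L) : Set L := {b | S.SEnt X b}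

/-- Coh(α) = {β | ¬ (β ⪯ ¬α)}. -/
def Coh {L : Type} (S : Lang L) (pr : L → L → Prop) (a : L) : Set L :=
  {b | ¬ pr b (S.not a)}

/-- The base of α: deductively closed subsets of Coh(α). -/
def Base {L : Type} (S : Lang L) (pr : L → L → Prop) (a : L) : Set (Set L) :=
  {U | U = S.Cn U ∧ U ⊆ Coh S pr a}

/-- The maximal base of α. -/
def MaxBase {L : Type} (S : Lang L) (pr : L → L → Prop) (a : L) : Set (Set L) :=
  {U | U ∈ Base S pr a ∧ ∀ U', U' = S.Cn U' → U ⊂ U' → U' ∉ Base S pr a}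

/-- Maxiconsistent inference: α |~⪯ β. -/
def MInf {L : Type} (S : Lang L) (pr : L → L → Prop) (a b : L) : Prop :=
  ∀ U ∈ MaxBase S pr a, b ∈ S.Cn (U ∪ {a})

/-! If `β ⪯ α`, then `α` and `α ∨ β` are `⪯`-equivalent: Dominance gives `α ⪯ α ∨ β` and
`α ⪯ α`, and Left Disjunction then gives `α ∨ β ⪯ α`. Equivalence therefore transfers
`γ ⪯ ·` between `α` and `α ∨ β` in both directions. -/

theorem Lang.ent_refl {L : Type} (S : Lang L) (a : L) : S.ent a a :=
  fun _ _ h => h a rfl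

theorem Lang.ent_or_left {L : Type} (S : Lang L) (a b : L) : S.ent a (S.or a b) :=
  fun _ hv h => (hv.1 a b).2 (Or.inl (h a rfl))

theorem pr_or_equiv_of_pr {L : Type} {S : Lang L} {pr : L → L → Prop}
    (hld : ∀ a b c, pr b a → pr c a → pr (S.or b c) a)
    (hdom : ∀ a b, S.ent a b → pr a b) {a b : L} (hb : pr b a) :
    pr a (S.or a b) ∧ pr (S.or a b) a :=
  ⟨hdom _ _ (S.ent_or_left a b), hld a a b (hdom a a (S.ent_refl a)) hb⟩

theorem stmt4_general {L : Type} (S : Lang L) (pr : L → L → Prop)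
    (hld : ∀ a b c, pr b a → pr c a → pr (S.or b c) a)
    (heq : ∀ a b c, pr a b → pr b a → pr c a → pr c b)
    (hdom : ∀ a b, S.ent a b → pr a b) :
    (∀ a b c, pr c (S.or a b) → pr b a → pr c a) ∧
    (∀ a b c, pr c a → pr b a → pr c (S.or a b)) := by
  constructor
  · intro a b c hc hb
    obtain ⟨h_le_or, h_or_le⟩ := pr_or_equiv_of_pr hld hdom hb
    exact heq _ _ c h_or_le h_le_or hc
  · intro a b c hc hb
    obtain ⟨h_le_or, h_or_le⟩ := pr_or_equiv_of_pr hld hdom hb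
    exact heq _ _ c h_le_or h_or_le hc

/-- Left Disjunction and Equivalence, together with Dominance and Left Monotonicity,
imply Bounded Cut and Bounded Right Monotonicity. -/
theorem stmt4 {L : Type} (S : Lang L) (pr : L → L → Prop)
    (hld : ∀ a b c, pr b a → pr c a → pr (S.or b c) a)
    (heq : ∀ a b c, pr a b → pr b a → pr c a → pr c b)
    (hdom : ∀ a b, S.ent a b → pr a b)
    (hlm : ∀ a b c, S.ent a b → pr b c → pr a c) :
    (∀ a b c, pr c (S.or a b) → pr b a → pr c a) ∧
    (∀ a b c, pr c a → pr b a → pr c (S.or a b)) :=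
  stmt4_general S pr hld heq hdom
end

section
/- In an entrenchment frame, if U is a deductively closed set of sentences with U ⊆ Coh(α), then U ∪ {α} is consistent (i.e., U, α ⊬ ⊥). -/
theorem Lang.SEnt.not_of_union_singleton_bot {L : Type} {S : Lang L} {X : Set L} {a : L}
    (h : S.SEnt (X ∪ {a}) S.bot) : S.SEnt X (S.not a) := by
  intro v hv hX
  rw [hv.2.2.1]
  intro ha
  refine hv.2.2.2.2.1 (h v hv fun b hb => ?_)
  rcases hb with hb | rfl
  exacts [hX b hb, ha]

theorem neg_notMem_Coh {L : Type} (S : Lang L) {pr : L → L → Prop} (hrefl : ∀ b, pr b b)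
    (a : L) : S.not a ∉ Coh S pr a :=
  fun h => h (hrefl _)

theorem stmt9_general {L : Type} (S : Lang L) (pr : L → L → Prop)
    (hrefl : ∀ a, pr a a)
    (a : L) (U : Set L) (hU : U = S.Cn U) (hsub : U ⊆ Coh S pr a) :
    ¬ S.SEnt (U ∪ {a}) S.bot := by
  intro h
  have hna : S.not a ∈ U := hU ▸ h.not_of_union_singleton_bot
  exact neg_notMem_Coh S hrefl a (hsub hna)

/-- In an entrenchment frame, a deductively closed U ⊆ Coh(α) is consistent with α. -/
theorem stmt9 {L : Type} (S : Lang L) (pr : L → L → Prop)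
    (hrefl : ∀ a, pr a a)
    (hlm : ∀ a b c, S.ent a b → pr b c → pr a c)
    (hle : ∀ a b c, S.ent a b → S.ent b a → (pr c a ↔ pr c b))
    (a : L) (U : Set L) (hU : U = S.Cn U) (hsub : U ⊆ Coh S pr a) :
    ¬ S.SEnt (U ∪ {a}) S.bot :=
  stmt9_general S pr hrefl a U hU hsub
end

section
/- In an entrenchment frame, the following are equivalent: (i) α maxiconsistently infers ⊥; (ii) Coh(α) = ∅; (iii) ⊤ ⪯ ¬α; (iv) β ⪯ ¬α for every sentence β. -/
open Filter Set

lemma compactness {L : Type} (S : Lang L) (X : Set L) (b : L)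
    (h : S.SEnt X b) : ∃ Y : Finset L, ↑Y ⊆ X ∧ S.SEnt ↑Y b := by
  classical
  by_contra hc
  push_neg at hc
  have hv : ∀ i : {Y : Finset L // (↑Y : Set L) ⊆ X},
      ∃ v, S.Val v ∧ (∀ a ∈ (i.1 : Set L), v a) ∧ ¬ v b := by
    intro i
    have := hc i.1 i.2
    unfold Lang.SEnt at this
    push_neg at this
    obtain ⟨v, hv1, hv2, hv3⟩ := this
    exact ⟨v, hv1, hv2, hv3⟩
  choose v hval hsat hnb using hv
  haveI hne : Nonempty {Y : Finset L // (↑Y : Set L) ⊆ X} := ⟨⟨∅, by simp⟩⟩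
  let f : Filter {Y : Finset L // (↑Y : Set L) ⊆ X} :=
    ⨅ i : {Y : Finset L // (↑Y : Set L) ⊆ X}, 𝓟 {j : {Y : Finset L // (↑Y : Set L) ⊆ X} | i.1 ⊆ j.1}
  have hdir : Directed (· ≥ ·)
      (fun i : {Y : Finset L // (↑Y : Set L) ⊆ X} =>
        (𝓟 {j : {Y : Finset L // (↑Y : Set L) ⊆ X} | i.1 ⊆ j.1})) := by
    intro i j
    refine ⟨⟨i.1 ∪ j.1, by
      intro x hx
      rcases Finset.mem_union.mp (by exact_mod_cast hx) with h' | h'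
      · exact i.2 h'
      · exact j.2 h'⟩, ?_, ?_⟩
    · exact principal_mono.mpr fun k hk => (Finset.union_subset_iff.mp hk).1
    · exact principal_mono.mpr fun k hk => (Finset.union_subset_iff.mp hk).2
  haveI hnb' : f.NeBot := iInf_neBot_of_directed hdir
    (fun i => principal_neBot_iff.mpr ⟨i, by simp⟩)
  let U := Ultrafilter.of f
  have hUf : ↑U ≤ f := Ultrafilter.of_le f
  let w : L → Prop := fun c => {i | v i c} ∈ U
  have hValw : S.Val w := by
    refine ⟨?_, ?_, ?_, ?_, ?_, ?_⟩
    · intro a c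
      have hs : {i | v i (S.or a c)} = {i | v i a} ∪ {i | v i c} := by
        ext i; exact (hval i).1 a c
      show {i | v i (S.or a c)} ∈ U ↔ _ ∈ U ∨ _ ∈ U
      rw [hs]
      exact Ultrafilter.union_mem_iff
    · intro a c
      have hs : {i | v i (S.and a c)} = {i | v i a} ∩ {i | v i c} := by
        ext i; exact (hval i).2.1 a c
      show {i | v i (S.and a c)} ∈ U ↔ _ ∈ U ∧ _ ∈ U
      rw [hs]
      exact inter_mem_iff
    · intro a
      have hs : {i | v i (S.not a)} = {i | v i a}ᶜ := by
        ext i; exact (hval i).2.2.1 a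
      show {i | v i (S.not a)} ∈ U ↔ ¬ (_ ∈ U)
      rw [hs]
      exact Ultrafilter.compl_mem_iff_notMem
    · intro a c
      have hs : {i | v i (S.imp a c)} = {i | v i a}ᶜ ∪ {i | v i c} := by
        ext i
        show v i (S.imp a c) ↔ ¬ v i a ∨ v i c
        rw [(hval i).2.2.2.1 a c]
        tauto
      show {i | v i (S.imp a c)} ∈ U ↔ (_ ∈ U → _ ∈ U)
      rw [hs, Ultrafilter.union_mem_iff, Ultrafilter.compl_mem_iff_notMem]
      tauto
    · have hs : {i | v i S.bot} = (∅ : Set _) := by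
        ext i
        show v i S.bot ↔ False
        simp [(hval i).2.2.2.2.1]
      show ¬ ({i | v i S.bot} ∈ U)
      rw [hs]
      exact U.empty_notMem
    · have hs : {i | v i S.top} = (univ : Set _) := by
        ext i
        show v i S.top ↔ True
        simp [(hval i).2.2.2.2.2]
      show {i | v i S.top} ∈ U
      rw [hs]
      exact univ_mem
  have hwX : ∀ c ∈ X, w c := by
    intro c hcX
    have hi0 : (↑({c} : Finset L) : Set L) ⊆ X := by simpa using hcX
    have h1 : {j : {Y : Finset L // (↑Y : Set L) ⊆ X} |
        (⟨{c}, hi0⟩ : {Y : Finset L // (↑Y : Set L) ⊆ X}).1 ⊆ j.1} ∈ f :=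
      le_principal_iff.mp (iInf_le
        (fun i : {Y : Finset L // (↑Y : Set L) ⊆ X} => 𝓟 {j : {Y : Finset L // (↑Y : Set L) ⊆ X} | i.1 ⊆ j.1})
        (⟨{c}, hi0⟩ : {Y : Finset L // (↑Y : Set L) ⊆ X}))
    have h2 : {j : {Y : Finset L // (↑Y : Set L) ⊆ X} |
        (⟨{c}, hi0⟩ : {Y : Finset L // (↑Y : Set L) ⊆ X}).1 ⊆ j.1} ∈ U := hUf h1
    refine mem_of_superset h2 ?_
    intro j hj
    show v j c
    exact hsat j c (by exact_mod_cast hj (Finset.mem_singleton_self c))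
  have hwb : w b := h w hValw hwX
  have hempty : {i | v i b} = (∅ : Set _) := by
    ext i
    show v i b ↔ False
    simp [hnb i]
  have : (∅ : Set _) ∈ U := hempty ▸ hwb
  exact U.empty_notMem this

lemma sent_mono {L : Type} (S : Lang L) {X X' : Set L} {b : L} (hXX : X ⊆ X')
    (h : S.SEnt X b) : S.SEnt X' b :=
  fun v hv hX => h v hv (fun c hc => hX c (hXX hc))

lemma subset_cn {L : Type} (S : Lang L) (X : Set L) : X ⊆ S.Cn X :=
  fun b hb _ hv hX => hX b hb

lemma cn_idem {L : Type} (S : Lang L) (X : Set L) : S.Cn X = S.Cn (S.Cn X) := by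
  apply Set.Subset.antisymm (subset_cn S _)
  intro b hb v hv hX
  exact hb v hv (fun c hc => hc v hv hX)

lemma top_mem_cn {L : Type} (S : Lang L) (X : Set L) : S.top ∈ S.Cn X :=
  fun v hv _ => hv.2.2.2.2.2

lemma finset_chain_mem {L : Type} {c : Set (Set L)} (hch : IsChain (· ⊆ ·) c)
    (hne : c.Nonempty) (Y : Finset L) (hY : ↑Y ⊆ ⋃₀ c) : ∃ V ∈ c, ↑Y ⊆ V := by
  classical
  induction Y using Finset.induction_on with
  | empty => obtain ⟨V, hV⟩ := hne; exact ⟨V, hV, by simp⟩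
  | @insert x Y hx ih =>
    have hYsub : (↑Y : Set L) ⊆ ⋃₀ c := by
      intro z hz; exact hY (by exact_mod_cast Finset.mem_insert_of_mem (by exact_mod_cast hz))
    obtain ⟨V1, hV1, hYV1⟩ := ih hYsub
    obtain ⟨V2, hV2, hxV2⟩ := hY (by exact_mod_cast Finset.mem_insert_self x Y)
    by_cases hVeq : V1 = V2
    · subst hVeq
      refine ⟨V1, hV1, ?_⟩
      intro z hz
      rcases Finset.mem_insert.mp (by exact_mod_cast hz) with h' | h'
      · exact h' ▸ hxV2
      · exact hYV1 (by exact_mod_cast h')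
    · rcases hch hV1 hV2 (by exact hVeq) with h' | h'
      · refine ⟨V2, hV2, ?_⟩
        intro z hz
        rcases Finset.mem_insert.mp (by exact_mod_cast hz) with h'' | h''
        · exact h'' ▸ hxV2
        · exact h' (hYV1 (by exact_mod_cast h''))
      · refine ⟨V1, hV1, ?_⟩
        intro z hz
        rcases Finset.mem_insert.mp (by exact_mod_cast hz) with h'' | h''
        · exact h'' ▸ h' hxV2
        · exact hYV1 (by exact_mod_cast h'')


/-- α |~⪯ ⊥ iff Coh(α) = ∅ iff ⊤ ⪯ ¬α iff every β satisfies β ⪯ ¬α. -/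
theorem stmt11 {L : Type} (S : Lang L) (pr : L → L → Prop)
    (hrefl : ∀ a, pr a a)
    (hlm : ∀ a b c, S.ent a b → pr b c → pr a c)
    (hle : ∀ a b c, S.ent a b → S.ent b a → (pr c a ↔ pr c b))
    (a : L) :
    (MInf S pr a S.bot ↔ Coh S pr a = ∅) ∧
    (Coh S pr a = ∅ ↔ pr S.top (S.not a)) ∧
    (pr S.top (S.not a) ↔ ∀ b, pr b (S.not a)) := by
  have ent_top : ∀ b : L, S.ent b S.top := fun b v hv _ => hv.2.2.2.2.2
  have h34 : pr S.top (S.not a) ↔ ∀ b, pr b (S.not a) :=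
    ⟨fun h b => hlm b S.top (S.not a) (ent_top b) h, fun h => h S.top⟩
  have h23 : Coh S pr a = ∅ ↔ pr S.top (S.not a) := by
    constructor
    · intro h
      by_contra hnp
      have : S.top ∈ Coh S pr a := hnp
      rw [h] at this
      exact this
    · intro h
      ext b
      simp only [Coh, Set.mem_setOf_eq, Set.mem_empty_iff_false, iff_false, not_not]
      exact hlm b S.top (S.not a) (ent_top b) h
  refine ⟨?_, h23, h34⟩
  constructor
  · -- MInf → Coh = ∅
    intro hminf
    by_contra hne
    obtain ⟨b, hb⟩ := Set.nonempty_iff_ne_empty.mpr hne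
    -- Cn {b} is in Base
    have hU0 : S.Cn {b} ∈ Base S pr a := by
      refine ⟨cn_idem S _, ?_⟩
      intro d hd
      intro hpd
      exact hb (hlm b d (S.not a) hd hpd)
    -- Zorn to get a maximal base
    have hchainUB : ∀ c ⊆ Base S pr a, IsChain (· ⊆ ·) c → c.Nonempty →
        ∃ ub ∈ Base S pr a, ∀ s ∈ c, s ⊆ ub := by
      intro c hcB hch hcne
      refine ⟨S.Cn (⋃₀ c), ⟨cn_idem S _, ?_⟩, ?_⟩
      · intro d hd
        obtain ⟨Y, hYsub, hYd⟩ := compactness S _ d hd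
        obtain ⟨V, hVc, hYV⟩ := finset_chain_mem hch hcne Y hYsub
        have hVbase := hcB hVc
        have : d ∈ S.Cn V := sent_mono S hYV hYd
        rw [← hVbase.1] at this
        exact hVbase.2 this
      · intro s hs
        exact (Set.subset_sUnion_of_mem hs).trans (subset_cn S _)
    obtain ⟨m, _, hmmax⟩ := zorn_subset_nonempty (Base S pr a) hchainUB _ hU0
    have hmbase : m ∈ Base S pr a := hmmax.prop
    have hmMax : m ∈ MaxBase S pr a := by
      refine ⟨hmbase, ?_⟩
      intro U' _ hssub hU'base
      exact hssub.ne (hmmax.eq_of_subset hU'base hssub.subset)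
    have hbot := hminf m hmMax
    -- derive not a ∈ m
    have hna : S.not a ∈ S.Cn m := by
      intro v hv hm
      rw [hv.2.2.1 a]
      intro hva
      refine hv.2.2.2.2.1 (hbot v hv ?_)
      intro c hc
      rcases hc with hc | hc
      · exact hm c hc
      · rwa [hc]
    rw [← hmbase.1] at hna
    exact hmbase.2 hna (hrefl (S.not a))
  · -- Coh = ∅ → MInf
    intro h
    intro U hU
    exfalso
    have hUbase := hU.1
    have : S.top ∈ U := by rw [hUbase.1]; exact top_mem_cn S U
    have := hUbase.2 this
    rw [h] at this
    exact this
end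

section
/- In an entrenchment frame, if α maxiconsistently infers β then ¬β ⪯ ¬α and also α → ¬β ⪯ ¬α. -/
/-!
Suppose `γ ∧ α ⊢ ¬β` (for `γ = ¬β`, and for `γ = α → ¬β` by modus ponens) but `γ ⋠ ¬α`. By Left
Monotonicity every consequence of `γ` lies in `Coh(α)`, so `Cn {γ}` is a base of `α`, and by
Zorn's lemma (using compactness of classical consequence, which makes the union of a chain of
closed sets closed) it extends to a maximal base `M`. Since `α |~ β`, `β ∈ Cn (M ∪ {α})`;
together with `γ ∈ M` this gives `¬α ∈ Cn M = M ⊆ Coh(α)`, i.e. `¬(¬α ⪯ ¬α)`, contradicting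
Reflexivity.
-/

open Set

namespace Lang

variable {L : Type} (S : Lang L)

def Satisfiable (X : Set L) : Prop :=
  ∃ v, S.Val v ∧ ∀ c ∈ X, v c

theorem isClosed_setOf_val : IsClosed {v : L → Bool | S.Val (fun c => v c = true)} := by
  have key : ∀ (p : Bool → Bool → Bool → Prop) (x y z : L),
      IsClosed {v : L → Bool | p (v x) (v y) (v z)} := fun p x y z =>
    IsClosed.preimage (f := fun v : L → Bool => (v x, v y, v z)) (by fun_prop)
      (isClosed_discrete {q : Bool × Bool × Bool | p q.1 q.2.1 q.2.2})
  simp only [Lang.Val, ofPred_and, ofPred_forall]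
  refine .inter (isClosed_iInter fun a => isClosed_iInter fun b =>
    key (fun r p q => r = true ↔ p = true ∨ q = true) (S.or a b) a b) <|
    .inter (isClosed_iInter fun a => isClosed_iInter fun b =>
    key (fun r p q => r = true ↔ p = true ∧ q = true) (S.and a b) a b) <|
    .inter (isClosed_iInter fun a =>
    key (fun r p _ => r = true ↔ ¬p = true) (S.not a) a a) <|
    .inter (isClosed_iInter fun a => isClosed_iInter fun b =>
    key (fun r p q => r = true ↔ (p = true → q = true)) (S.imp a b) a b) <|
    .inter (key (fun r _ _ => ¬r = true) S.bot S.bot S.bot)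
      (key (fun r _ _ => r = true) S.top S.top S.top)

/-- The compactness theorem: by Tychonoff, the valuations form a compact subset of `L → Bool`. -/
theorem satisfiable_of_forall_finset {X : Set L}
    (h : ∀ u : Finset L, ↑u ⊆ X → S.Satisfiable ↑u) : S.Satisfiable X := by
  classical
  obtain ⟨v, hv, hvX⟩ := S.isClosed_setOf_val.isCompact.inter_iInter_nonempty
    (fun c : X => {v : L → Bool | v c = true})
    (fun c => isClosed_eq (continuous_apply _) continuous_const) fun u => by
      obtain ⟨w, hw, hwu⟩ := h (u.map (Function.Embedding.subtype _)) (by simp)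
      refine ⟨fun c => decide (w c), by simpa using hw, ?_⟩
      simp only [mem_iInter, mem_ofPred_eq, decide_eq_true_eq]
      exact fun c hc => hwu c (Finset.mem_map_of_mem _ hc)
  exact ⟨fun c => v c = true, hv, fun c hc => mem_iInter.1 hvX ⟨c, hc⟩⟩

variable {S}

theorem satisfiable_insert_not_iff {X : Set L} {b : L} :
    S.Satisfiable (insert (S.not b) X) ↔ ¬S.SEnt X b := by
  constructor
  · rintro ⟨v, hv, hvX⟩ hb
    exact (hv.2.2.1 b).1 (hvX _ (mem_insert _ _))
      (hb v hv fun c hc => hvX c (mem_insert_of_mem _ hc))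
  · intro hb
    simp only [SEnt, not_forall] at hb
    obtain ⟨v, hv, hvX, hvb⟩ := hb
    exact ⟨v, hv, forall_mem_insert.2 ⟨(hv.2.2.1 b).2 hvb, hvX⟩⟩

theorem SEnt.mono {X Y : Set L} {b : L} (hXY : X ⊆ Y) (h : S.SEnt X b) : S.SEnt Y b :=
  fun v hv hY => h v hv fun c hc => hY c (hXY hc)

theorem SEnt.exists_finset {X : Set L} {b : L} (h : S.SEnt X b) :
    ∃ u : Finset L, ↑u ⊆ X ∧ S.SEnt ↑u b := by
  classical
  by_contra! hfin
  refine satisfiable_insert_not_iff.1 (S.satisfiable_of_forall_finset fun w hw => ?_) h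
  have hwX : ↑(w.erase (S.not b)) ⊆ X := fun c hc =>
    (hw (Finset.mem_of_mem_erase hc)).resolve_left (Finset.ne_of_mem_erase hc)
  obtain ⟨v, hv, hvw⟩ := satisfiable_insert_not_iff.2 (hfin _ hwX)
  refine ⟨v, hv, fun c hc => hvw c ?_⟩
  by_cases hcb : c = S.not b
  · exact hcb ▸ mem_insert _ _
  · exact mem_insert_of_mem _ (Finset.mem_erase.2 ⟨hcb, hc⟩)

theorem subset_Cn (X : Set L) : X ⊆ S.Cn X :=
  fun _ hc _ _ hX => hX _ hc

theorem Cn_Cn (X : Set L) : S.Cn (S.Cn X) = S.Cn X :=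
  (subset_Cn _).antisymm' fun _ hb v hv hX => hb v hv fun _ hc => hc v hv hX

theorem sUnion_eq_Cn_of_isChain {c : Set (Set L)} (hc : IsChain (· ⊆ ·) c) (hne : c.Nonempty)
    (hcl : ∀ U ∈ c, U = S.Cn U) : ⋃₀ c = S.Cn (⋃₀ c) := by
  refine (subset_Cn _).antisymm fun d hd => ?_
  obtain ⟨u, hu, hud⟩ := SEnt.exists_finset hd
  obtain ⟨U, hUc, huU⟩ := hc.directedOn.exists_mem_subset_of_finset_subset_biUnion (f := id) hne
    (by rwa [sUnion_eq_biUnion] at hu)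
  refine ⟨U, hUc, ?_⟩
  rw [hcl U hUc]
  exact hud.mono huU

end Lang

section Entrenchment

variable {L : Type} {S : Lang L} {pr : L → L → Prop}

theorem exists_maxBase_superset {a : L} {U : Set L} (hU : U ∈ Base S pr a) :
    ∃ M ∈ MaxBase S pr a, U ⊆ M := by
  obtain ⟨M, hUM, hM⟩ := zorn_subset_nonempty (Base S pr a)
    (fun c hcB hc hne => ⟨⋃₀ c, ⟨S.sUnion_eq_Cn_of_isChain hc hne fun U hU => (hcB hU).1,
      sUnion_subset fun U hU => (hcB hU).2⟩, fun _ => subset_sUnion_of_mem⟩) U hU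
  exact ⟨M, ⟨hM.1, fun U' _ hMU' hU' => hMU'.ne (hMU'.1.antisymm (hM.2 hU' hMU'.1))⟩, hUM⟩

theorem Cn_singleton_mem_base (hlm : ∀ a b c, S.ent a b → pr b c → pr a c) {a g : L}
    (hg : g ∈ Coh S pr a) : S.Cn {g} ∈ Base S pr a :=
  ⟨(S.Cn_Cn _).symm, fun d hgd hd => hg (hlm g d _ hgd hd)⟩

theorem MInf.pr_not_of_sEnt (hrefl : ∀ a, pr a a) (hlm : ∀ a b c, S.ent a b → pr b c → pr a c)
    {a b g : L} (h : MInf S pr a b) (hg : S.SEnt {g, a} (S.not b)) : pr g (S.not a) := by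
  by_contra hgCoh
  obtain ⟨M, hM, hgM⟩ := exists_maxBase_superset (Cn_singleton_mem_base hlm hgCoh)
  have hb := h M hM
  have hnotA : S.not a ∈ S.Cn M := by
    intro v hv hMv
    refine (hv.2.2.1 a).2 fun hva => (hv.2.2.1 b).1 ?_ (hb v hv ?_)
    · have hvg : v g := hMv g (hgM (S.subset_Cn _ rfl))
      exact hg v hv (by rintro c (rfl | rfl) <;> assumption)
    · rintro c (hc | rfl)
      exacts [hMv c hc, hva]
  rw [← hM.1.1] at hnotA
  exact hM.1.2 hnotA (hrefl _)

end Entrenchment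

theorem stmt13_general {L : Type} (S : Lang L) (pr : L → L → Prop)
    (hrefl : ∀ a, pr a a)
    (hlm : ∀ a b c, S.ent a b → pr b c → pr a c)
    (a b : L) (h : MInf S pr a b) :
    pr (S.not b) (S.not a) ∧ pr (S.imp a (S.not b)) (S.not a) :=
  ⟨h.pr_not_of_sEnt hrefl hlm fun _ _ hv => hv _ (mem_insert _ _),
    h.pr_not_of_sEnt hrefl hlm fun _ hv hX =>
      (hv.2.2.2.1 a _).1 (hX _ (mem_insert _ _)) (hX _ (mem_insert_of_mem _ rfl))⟩

/-- If α maxiconsistently infers β then ¬β ⪯ ¬α and α → ¬β ⪯ ¬α. -/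
theorem stmt13 {L : Type} (S : Lang L) (pr : L → L → Prop)
    (hrefl : ∀ a, pr a a)
    (hlm : ∀ a b c, S.ent a b → pr b c → pr a c)
    (hle : ∀ a b c, S.ent a b → S.ent b a → (pr c a ↔ pr c b))
    (a b : L) (h : MInf S pr a b) :
    pr (S.not b) (S.not a) ∧ pr (S.imp a (S.not b)) (S.not a) :=
  stmt13_general S pr hrefl hlm a b h
end

section
/- In an entrenchment frame whose relation satisfies Bounded Cut, if ¬β ⪯ ¬α then Coh(α) ⊆ Coh(α∧β); dually, if ⪯ satisfies Bounded Right Monotonicity, then ¬β ⪯ ¬α implies Coh(α∧β) ⊆ Coh(α). -/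
namespace Lang

variable {L : Type} (S : Lang L)

theorem ent_not_and_or_not (a b : L) : S.ent (S.not (S.and a b)) (S.or (S.not a) (S.not b)) := by
  rintro v ⟨hor, hand, hnot, -⟩ hv
  have h := hv _ rfl
  rw [hnot, hand] at h
  rw [hor, hnot, hnot]
  tauto

theorem ent_or_not_not_and (a b : L) : S.ent (S.or (S.not a) (S.not b)) (S.not (S.and a b)) := by
  rintro v ⟨hor, hand, hnot, -⟩ hv
  have h := hv _ rfl
  rw [hor, hnot, hnot] at h
  rw [hnot, hand]
  tauto

end Lang

section Entrenchment

variable {L : Type} {S : Lang L} {pr : L → L → Prop}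

theorem pr_not_and_iff (hle : ∀ a b c, S.ent a b → S.ent b a → (pr c a ↔ pr c b))
    (a b c : L) : pr c (S.not (S.and a b)) ↔ pr c (S.or (S.not a) (S.not b)) :=
  hle _ _ c (S.ent_not_and_or_not a b) (S.ent_or_not_not_and a b)

theorem coh_subset_coh_and_of_boundedCut
    (hle : ∀ a b c, S.ent a b → S.ent b a → (pr c a ↔ pr c b))
    (hcut : ∀ a b c, pr c (S.or a b) → pr b a → pr c a)
    {a b : L} (hba : pr (S.not b) (S.not a)) : Coh S pr a ⊆ Coh S pr (S.and a b) :=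
  fun c hc hc_and => hc (hcut _ _ c ((pr_not_and_iff hle a b c).mp hc_and) hba)

theorem coh_and_subset_coh_of_boundedRightMono
    (hle : ∀ a b c, S.ent a b → S.ent b a → (pr c a ↔ pr c b))
    (hmono : ∀ a b c, pr c a → pr b a → pr c (S.or a b))
    {a b : L} (hba : pr (S.not b) (S.not a)) : Coh S pr (S.and a b) ⊆ Coh S pr a :=
  fun c hc_and hc => hc_and ((pr_not_and_iff hle a b c).mpr (hmono _ _ c hc hba))

end Entrenchment

theorem stmt15_general {L : Type} (S : Lang L) (pr : L → L → Prop)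
    (hle : ∀ a b c, S.ent a b → S.ent b a → (pr c a ↔ pr c b)) :
    ((∀ a b c, pr c (S.or a b) → pr b a → pr c a) →
      ∀ a b, pr (S.not b) (S.not a) → Coh S pr a ⊆ Coh S pr (S.and a b)) ∧
    ((∀ a b c, pr c a → pr b a → pr c (S.or a b)) →
      ∀ a b, pr (S.not b) (S.not a) → Coh S pr (S.and a b) ⊆ Coh S pr a) :=
  ⟨fun hcut _ _ hba => coh_subset_coh_and_of_boundedCut hle hcut hba,
    fun hmono _ _ hba => coh_and_subset_coh_of_boundedRightMono hle hmono hba⟩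

/-- Bounded Cut: ¬β ⪯ ¬α implies Coh(α) ⊆ Coh(α∧β); Bounded Right Monotonicity:
¬β ⪯ ¬α implies Coh(α∧β) ⊆ Coh(α). -/
theorem stmt15 {L : Type} (S : Lang L) (pr : L → L → Prop)
    (hrefl : ∀ a, pr a a)
    (hlm : ∀ a b c, S.ent a b → pr b c → pr a c)
    (hle : ∀ a b c, S.ent a b → S.ent b a → (pr c a ↔ pr c b)) :
    ((∀ a b c, pr c (S.or a b) → pr b a → pr c a) →
      ∀ a b, pr (S.not b) (S.not a) → Coh S pr a ⊆ Coh S pr (S.and a b)) ∧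
    ((∀ a b c, pr c a → pr b a → pr c (S.or a b)) →
      ∀ a b, pr (S.not b) (S.not a) → Coh S pr (S.and a b) ⊆ Coh S pr a) :=
  stmt15_general S pr hle
end
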